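/- Every codimension-3 decoration (λ, μ) with k = ∑μⱼ satisfies λ₁ + μ₁ ≤ k + 1. -/

import Mathlib

/-- Sort a list of integers in non-increasing order. -/
def rsort (l : List ℤ) : List ℤ := List.insertionSort (· ≥ ·) l

/-- Remove all non-positive parts (trailing zeros) from a partition. -/
def strip (l : List ℤ) : List ℤ := l.filter (fun x => 0 < x)

/-- The smallest minimal link of a codimension-`c` pair of partitions `(λ, μ)`:
choose the `c` largest parts of `λ` (padding with zeros if needed), shift them by
`p = (c-2)k + 1 - (λ₁ + ⋯ + λ_c)` where `k = ∑ μⱼ`, merge with `μ` and re-sort;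
the other partition becomes `(λ_{c+1}, …, λ_b)`. -/
def smlink (c : ℕ) (P : List ℤ × List ℤ) : List ℤ × List ℤ :=
  let p : ℤ := ((c : ℤ) - 2) * P.2.sum + 1 - (P.1.take c).sum
  (strip (rsort ((P.1.take c ++ List.replicate (c - P.1.length) 0).map (· + p) ++ P.2)),
   strip (P.1.drop c))

/-- The smallest minimal link of `P` produces nonnegative parts, i.e. `λ_c + p ≥ 0`. -/
def ValidLink (c : ℕ) (P : List ℤ × List ℤ) : Prop :=
  0 ≤ P.1.getD (c - 1) 0 + (((c : ℤ) - 2) * P.2.sum + 1 - (P.1.take c).sum)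

/-- A partition: a non-increasing list of positive integers. -/
def IsPartition (l : List ℤ) : Prop := l.Pairwise (· ≥ ·) ∧ ∀ x ∈ l, 0 < x

/-- A codimension-`c` decoration: a pair of partitions reachable to the complete
intersection pair `((1^c), (1))` by finitely many smallest minimal links, all of
whose intermediate links are valid (have nonnegative parts). -/
def IsDecoration (c : ℕ) (P : List ℤ × List ℤ) : Prop :=
  IsPartition P.1 ∧ IsPartition P.2 ∧
  ∃ n : ℕ, (∀ m < n, ValidLink c ((smlink c)^[m] P)) ∧
    (smlink c)^[n] P = (List.replicate c 1, [1])

/-! Under a link the defect `|λ| - 2|μ| - 1` is multiplied by `-2`; it vanishes at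
`((1,1,1),(1))`, hence on every decoration `|λ| = 2k + 1`. Let `(λ', μ')` be the link of
`(λ, μ)`, so `|μ'| = 2k + 1 - (λ₁ + λ₂ + λ₃)`. Since `λ₁ + p` and `μ₁` are distinct entries of
the list that is sorted and stripped into `λ'`, `λ₁ + p + μ₁ ≤ λ'₁ + λ'₂`, and the latter is at
most `|μ'| + 1` because `(λ', μ')` is a decoration. Substituting `p = k + 1 - (λ₁ + λ₂ + λ₃)`
gives `λ₁ + μ₁ ≤ k + 1`. -/

namespace List

lemma getD_nonneg {α : Type*} [Preorder α] [Zero α] {l : List α} (h : ∀ x ∈ l, 0 ≤ x)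
    (i : ℕ) : 0 ≤ l.getD i 0 := by
  rw [getD_eq_getElem?_getD]
  cases hi : l[i]? with
  | none => exact le_rfl
  | some x => exact h x (mem_of_getElem? hi)

lemma Subperm.mem_tail_or_mem_tail {α : Type*} [DecidableEq α] {x a b : α} {t : List α}
    (h : [a, b] <+~ x :: t) : a ∈ t ∨ b ∈ t := by
  by_contra! hab
  have ha : a = x := by simpa [hab.1] using h.subset (mem_cons_self ..)
  have hb : b = x := by simpa [hab.2] using h.subset (by simp : b ∈ [a, b])
  have := h.count_le x
  simp [ha, hb, count_eq_zero_of_not_mem (ha ▸ hab.1)] at this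

namespace Pairwise

lemma le_getD_zero {α : Type*} [Preorder α] {l : List α} (hl : l.Pairwise (· ≥ ·)) {x d : α}
    (hx : x ∈ l) : x ≤ l.getD 0 d := by
  rcases l with _ | ⟨y, t⟩
  · simp at hx
  · rcases mem_cons.1 hx with rfl | hx
    · simp
    · exact rel_of_pairwise_cons hl hx

lemma add_le_of_subperm {α : Type*} [AddCommMonoid α] [LinearOrder α] [IsOrderedAddMonoid α]
    {l : List α} (hl : l.Pairwise (· ≥ ·)) {a b d : α} (h : [a, b] <+~ l) :
    a + b ≤ l.getD 0 d + l.getD 1 d := by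
  rcases l with _ | ⟨x, t⟩
  · simpa using h.length_le
  have ha : a ≤ x := hl.le_getD_zero (d := d) (h.subset (mem_cons_self ..))
  have hb : b ≤ x := hl.le_getD_zero (d := d) (h.subset (by simp : b ∈ [a, b]))
  have ht : ∀ y ∈ t, y ≤ t.getD 0 d := fun y hy => (pairwise_cons.1 hl).2.le_getD_zero hy
  simp only [getD_cons_zero, getD_cons_succ]
  rcases h.mem_tail_or_mem_tail with h' | h'
  · exact add_comm a b ▸ add_le_add hb (ht a h')
  · exact add_le_add ha (ht b h')

end Pairwise

end List

open List

lemma pairwise_rsort (l : List ℤ) : (rsort l).Pairwise (· ≥ ·) := pairwise_insertionSort _ l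

lemma rsort_perm (l : List ℤ) : rsort l ~ l := perm_insertionSort _ l

lemma strip_eq_self {l : List ℤ} (h : ∀ x ∈ l, 0 < x) : strip l = l :=
  filter_eq_self.2 (by simpa using h)

lemma sum_strip {l : List ℤ} (h : ∀ x ∈ l, 0 ≤ x) : (strip l).sum = l.sum := by
  rw [← sum_filter_bne_zero l, strip]
  refine congrArg _ (filter_congr fun x hx => ?_)
  simp [lt_iff_le_and_ne, h x hx, eq_comm, bne, _root_.beq_eq_decide]

lemma isPartition_strip {l : List ℤ} (h : l.Pairwise (· ≥ ·)) : IsPartition (strip l) :=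
  ⟨h.sublist filter_sublist, fun x hx => by simpa using (mem_filter.1 hx).2⟩

lemma isPartition_strip_rsort (l : List ℤ) : IsPartition (strip (rsort l)) :=
  isPartition_strip (pairwise_rsort l)

lemma mem_strip_rsort {l : List ℤ} {x : ℤ} (hx : x ∈ l) (hpos : 0 < x) :
    x ∈ strip (rsort l) :=
  mem_filter.2 ⟨(rsort_perm l).mem_iff.2 hx, by simpa using hpos⟩

lemma getD_strip_rsort_nonneg (L : List ℤ) (i : ℕ) : 0 ≤ (strip (rsort L)).getD i 0 :=
  getD_nonneg (fun x hx => ((isPartition_strip_rsort L).2 x hx).le) i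

lemma le_getD_zero_strip_rsort {L : List ℤ} {x : ℤ} (hx : x ∈ L) :
    x ≤ (strip (rsort L)).getD 0 0 := by
  rcases le_or_gt x 0 with hx0 | hx0
  · exact hx0.trans (getD_strip_rsort_nonneg L 0)
  · exact (isPartition_strip_rsort L).1.le_getD_zero (mem_strip_rsort hx hx0)

lemma add_le_getD_strip_rsort {L : List ℤ} {a b : ℤ} (h : [a, b] <+~ L) :
    a + b ≤ (strip (rsort L)).getD 0 0 + (strip (rsort L)).getD 1 0 := by
  have ha := le_getD_zero_strip_rsort (h.subset (mem_cons_self ..))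
  have hb := le_getD_zero_strip_rsort (h.subset (by simp : b ∈ [a, b]))
  have hsecond := getD_strip_rsort_nonneg L 1
  rcases le_or_gt a 0 with ha0 | ha0
  · linarith
  rcases le_or_gt b 0 with hb0 | hb0
  · linarith
  refine (isPartition_strip_rsort L).1.add_le_of_subperm ?_
  have hpos := (rsort_perm L).filter (fun x => decide (0 < x))
  simpa [strip, ha0, hb0] using (h.filter _).trans hpos.symm.subperm

def linkShift (c : ℕ) (P : List ℤ × List ℤ) : ℤ :=
  ((c : ℤ) - 2) * P.2.sum + 1 - (P.1.take c).sum

lemma take_three_append_replicate (l : List ℤ) :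
    l.take 3 ++ replicate (3 - l.length) 0 = [l.getD 0 0, l.getD 1 0, l.getD 2 0] := by
  rcases l with _ | ⟨a, _ | ⟨b, _ | ⟨c, t⟩⟩⟩ <;> simp

lemma sum_take_three (l : List ℤ) : (l.take 3).sum = l.getD 0 0 + l.getD 1 0 + l.getD 2 0 := by
  rcases l with _ | ⟨a, _ | ⟨b, _ | ⟨c, t⟩⟩⟩ <;> simp [add_assoc]

lemma linkShift_three (P : List ℤ × List ℤ) :
    linkShift 3 P = P.2.sum + 1 - (P.1.getD 0 0 + P.1.getD 1 0 + P.1.getD 2 0) := by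
  rw [linkShift, sum_take_three]
  ring

lemma smlink_three (P : List ℤ × List ℤ) :
    smlink 3 P = (strip (rsort ([P.1.getD 0 0, P.1.getD 1 0, P.1.getD 2 0].map (· + linkShift 3 P)
      ++ P.2)), strip (P.1.drop 3)) := by
  rw [← take_three_append_replicate]
  rfl

lemma validLink_three_iff (P : List ℤ × List ℤ) :
    ValidLink 3 P ↔ P.1.getD 0 0 + P.1.getD 1 0 ≤ P.2.sum + 1 := by
  change 0 ≤ P.1.getD 2 0 + linkShift 3 P ↔ _
  rw [linkShift_three]
  omega

lemma IsPartition.getD_le_getD {l : List ℤ} (hl : IsPartition l) {i j : ℕ} (hij : i ≤ j) :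
    l.getD j 0 ≤ l.getD i 0 := by
  by_cases hj : j < l.length
  · rw [getD_eq_getElem l 0 hj, getD_eq_getElem l 0 (hij.trans_lt hj)]
    rcases hij.eq_or_lt with rfl | hij
    · rfl
    · exact pairwise_iff_getElem.1 hl.1 i j _ hj hij
  · rw [getD_eq_default l 0 (not_lt.1 hj)]
    exact getD_nonneg (fun x hx => (hl.2 x hx).le) i

lemma isPartition_smlink {c : ℕ} {P : List ℤ × List ℤ} (h : P.1.Pairwise (· ≥ ·)) :
    IsPartition (smlink c P).1 ∧ IsPartition (smlink c P).2 :=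
  ⟨isPartition_strip_rsort _, isPartition_strip h.drop⟩

lemma sum_smlink_three_fst {P : List ℤ × List ℤ} (h1 : IsPartition P.1) (h2 : IsPartition P.2)
    (hv : ValidLink 3 P) : (smlink 3 P).1.sum =
      3 * linkShift 3 P + (P.1.getD 0 0 + P.1.getD 1 0 + P.1.getD 2 0) + P.2.sum := by
  have hv' : 0 ≤ P.1.getD 2 0 + linkShift 3 P := hv
  have h02 := h1.getD_le_getD (i := 0) (j := 2) (by norm_num)
  have h12 := h1.getD_le_getD (i := 1) (j := 2) (by norm_num)
  rw [smlink_three, sum_strip, (rsort_perm _).sum_eq]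
  · simp only [sum_append, map_cons, map_nil, sum_cons, sum_nil]
    ring
  · intro x hx
    rw [(rsort_perm _).mem_iff] at hx
    simp only [mem_append, map_cons, map_nil, mem_cons, not_mem_nil, or_false] at hx
    rcases hx with (rfl | rfl | rfl) | hx
    · linarith
    · linarith
    · linarith
    · exact (h2.2 x hx).le

lemma sum_smlink_three_snd {P : List ℤ × List ℤ} (h1 : IsPartition P.1) :
    (smlink 3 P).2.sum = P.1.sum - (P.1.getD 0 0 + P.1.getD 1 0 + P.1.getD 2 0) := by
  rw [smlink_three, strip_eq_self fun x hx => h1.2 x (mem_of_mem_drop hx), ← sum_take_three,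
    ← sum_take_add_sum_drop P.1 3]
  ring

lemma le_getD_smlink_three (P : List ℤ × List ℤ) :
    P.1.getD 0 0 + linkShift 3 P + P.2.getD 0 0 ≤
      (smlink 3 P).1.getD 0 0 + (smlink 3 P).1.getD 1 0 := by
  rw [smlink_three]
  rcases P with ⟨l, _ | ⟨m, μ⟩⟩
  · simp only [getD_nil, add_zero]
    exact le_add_of_le_of_nonneg (le_getD_zero_strip_rsort (by simp))
      (getD_strip_rsort_nonneg _ 1)
  · exact add_le_getD_strip_rsort ((Sublist.cons_cons _ (singleton_sublist.2 (by simp))).subperm)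

namespace IsDecoration

variable {c : ℕ} {P : List ℤ × List ℤ}

lemma eq_or_smlink (h : IsDecoration c P) :
    P = (replicate c 1, [1]) ∨ ValidLink c P ∧ IsDecoration c (smlink c P) := by
  obtain ⟨h1, h2, _ | n, hval, hfin⟩ := h
  · exact Or.inl hfin
  rw [Nat.forall_lt_succ_left] at hval
  refine Or.inr ⟨hval.1, (isPartition_smlink h1.1).1, (isPartition_smlink h1.1).2, n, ?_, ?_⟩
  · simpa only [Function.iterate_succ_apply] using hval.2
  · simpa only [Function.iterate_succ_apply] using hfin

theorem induction {motive : List ℤ × List ℤ → Prop} (final : motive (replicate c 1, [1]))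
    (link : ∀ P, IsPartition P.1 → IsPartition P.2 → ValidLink c P → motive (smlink c P) →
      motive P)
    (h : IsDecoration c P) : motive P := by
  obtain ⟨h1, h2, n, hval, hfin⟩ := h
  induction n generalizing P with
  | zero =>
    obtain rfl : P = _ := hfin
    exact final
  | succ n ih =>
    rw [Nat.forall_lt_succ_left] at hval
    refine link P h1 h2 hval.1 (ih (isPartition_smlink h1.1).1 (isPartition_smlink h1.1).2 ?_ ?_)
    · simpa only [Function.iterate_succ_apply] using hval.2
    · simpa only [Function.iterate_succ_apply] using hfin

lemma getD_zero_add_getD_one_le (h : IsDecoration 3 P) :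
    P.1.getD 0 0 + P.1.getD 1 0 ≤ P.2.sum + 1 := by
  rcases h.eq_or_smlink with rfl | ⟨hv, -⟩
  · decide
  · exact (validLink_three_iff P).1 hv

lemma sum_fst (h : IsDecoration 3 P) : P.1.sum = 2 * P.2.sum + 1 :=
  h.induction (motive := fun P => P.1.sum = 2 * P.2.sum + 1) (by decide) fun P h1 h2 hv ih => by
    rw [sum_smlink_three_fst h1 h2 hv, sum_smlink_three_snd h1, linkShift_three] at ih
    linarith

end IsDecoration

/-- Every codimension-3 decoration `(λ, μ)` with `k = ∑μⱼ` satisfies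
`λ₁ + μ₁ ≤ k + 1`. -/
theorem stmt4 (P : List ℤ × List ℤ) (k : ℤ) (hk : P.2.sum = k)
    (h : IsDecoration 3 P) :
    P.1.getD 0 0 + P.2.getD 0 0 ≤ k + 1 := by
  subst hk
  rcases h.eq_or_smlink with rfl | ⟨-, hQ⟩
  · decide
  have hsum := h.sum_fst
  have hQtop := hQ.getD_zero_add_getD_one_le
  rw [sum_smlink_three_snd h.1] at hQtop
  have hlink := le_getD_smlink_three P
  rw [linkShift_three] at hlink
  linarith
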